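/- Let p ≥ 2 and fix k > 0. Let X, Y ∈ Sym⁺(p) and suppose ((U,D),(V,Λ)) ∈ 𝓔_X × 𝓔_Y satisfies d((U,D),(V,Λ)) = d_SR(X,Y). Then for every permutation π of {1,…,p} and every R ∈ SO(p) with R D Rᵀ = D and R Λ Rᵀ = Λ, the pair ((U R P_πᵀ, D_π), (V R P_πᵀ, Λ_π)) belongs to 𝓔_X × 𝓔_Y and satisfies d((U R P_πᵀ, D_π), (V R P_πᵀ, Λ_π)) = d_SR(X,Y). -/

import Mathlib

open Matrix

/-- `p × p` real matrices. -/
abbrev Mat (p : ℕ) := Matrix (Fin p) (Fin p) ℝ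

/-- `U ∈ SO(p)`: a rotation matrix. -/
def IsSO {p : ℕ} (U : Mat p) : Prop := U * Uᵀ = 1 ∧ U.det = 1

/-- `D ∈ Diag⁺(p)`: diagonal with positive diagonal entries. -/
def IsDiagPos {p : ℕ} (D : Mat p) : Prop := D.IsDiag ∧ ∀ i, 0 < D i i

/-- Antisymmetric matrix. -/
def IsAntisym {p : ℕ} (A : Mat p) : Prop := Aᵀ = -A

/-- The permutation matrix `P⁰_π`: in column `j`, the entry `π j` equals 1. -/
def P0 {p : ℕ} (π : Equiv.Perm (Fin p)) : Mat p :=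
  Matrix.of fun i j => if i = π j then (1 : ℝ) else 0

/-- `diag(−1,1,…,1)`. -/
def flipMat (p : ℕ) : Mat p :=
  Matrix.diagonal fun i => if (i : ℕ) = 0 then (-1 : ℝ) else 1

open scoped Classical in
/-- `P_π`: the determinant-one modification of `P⁰_π`. -/
noncomputable def Pmat {p : ℕ} (π : Equiv.Perm (Fin p)) : Mat p :=
  if (P0 π).det = 1 then P0 π else flipMat p * P0 π

/-- `D_π := P_π D P_πᵀ`. -/
noncomputable def permDiag {p : ℕ} (π : Equiv.Perm (Fin p)) (D : Mat p) : Mat p :=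
  Pmat π * D * (Pmat π)ᵀ

/-- The stabilizer group `G_D = {R ∈ SO(p) : R D Rᵀ = D}`. -/
def GD {p : ℕ} (D : Mat p) : Set (Mat p) := {R | IsSO R ∧ R * D * Rᵀ = D}

/-- Squared Frobenius norm. -/
noncomputable def frobSq {p : ℕ} (A : Mat p) : ℝ := ∑ i, ∑ j, (A i j) ^ 2

/-- `d_SO(U,V)²`: the minimal value of `‖A‖_F²/2` over antisymmetric `A` with `exp A = V Uᵀ`. -/
noncomputable def dSOsq {p : ℕ} (U V : Mat p) : ℝ :=
  sInf {x | ∃ A : Mat p, IsAntisym A ∧ NormedSpace.exp A = V * Uᵀ ∧ x = frobSq A / 2}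

/-- `d_𝒟(D,Λ)²`. -/
noncomputable def dDsq {p : ℕ} (D Λ : Mat p) : ℝ :=
  ∑ i, (Real.log (Λ i i) - Real.log (D i i)) ^ 2

/-- The geodesic distance on `SO(p) × Diag⁺(p)` (with weight `k`). -/
noncomputable def gdist {p : ℕ} (k : ℝ) (a b : Mat p × Mat p) : ℝ :=
  Real.sqrt (k * dSOsq a.1 b.1 + dDsq a.2 b.2)

/-- `𝓔_X`: the set of versions (eigen-decompositions) of `X`. -/
def Versions {p : ℕ} (X : Mat p) : Set (Mat p × Mat p) :=
  {a | IsSO a.1 ∧ IsDiagPos a.2 ∧ a.1 * a.2 * a.1ᵀ = X}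

/-- The scaling–rotation distance on `Sym⁺(p)`. -/
noncomputable def dSR {p : ℕ} (k : ℝ) (X Y : Mat p) : ℝ :=
  sInf {x | ∃ a ∈ Versions X, ∃ b ∈ Versions Y, x = gdist k a b}

/-! Right multiplication by the rotation `R P_πᵀ` leaves `V Uᵀ`, and hence `d_SO`, unchanged,
while conjugation by `P_π` only permutes diagonal entries, which leaves `d_𝒟` unchanged.
Since `R` stabilizes `D` and `Λ`, the new pairs are still versions of `X` and `Y`, at the same
(minimal) distance. -/

lemma IsSO.transpose {p : ℕ} {M : Mat p} (h : IsSO M) : IsSO Mᵀ :=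
  ⟨by rw [transpose_transpose]; exact mul_eq_one_comm.mp h.1, by rw [det_transpose]; exact h.2⟩

lemma IsSO.mul {p : ℕ} {M N : Mat p} (hM : IsSO M) (hN : IsSO N) : IsSO (M * N) := by
  refine ⟨?_, by rw [det_mul, hM.2, hN.2, mul_one]⟩
  rw [transpose_mul, Matrix.mul_assoc, ← Matrix.mul_assoc N, hN.1, Matrix.one_mul, hM.1]

lemma P0_eq_permMatrix {p : ℕ} (π : Equiv.Perm (Fin p)) : P0 π = (π⁻¹).permMatrix ℝ := by
  ext i j
  simp [P0, PEquiv.toMatrix_apply, Equiv.eq_symm_apply, eq_comm]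

lemma P0_mul_transpose {p : ℕ} (π : Equiv.Perm (Fin p)) : P0 π * (P0 π)ᵀ = 1 := by
  simp [P0_eq_permMatrix, ← permMatrix_mul]

lemma det_P0 {p : ℕ} (π : Equiv.Perm (Fin p)) : (P0 π).det = Equiv.Perm.sign π⁻¹ := by
  rw [P0_eq_permMatrix, det_permutation]

lemma P0_mul_diagonal_mul_transpose {p : ℕ} (π : Equiv.Perm (Fin p)) (d : Fin p → ℝ) :
    P0 π * diagonal d * (P0 π)ᵀ = diagonal (d ∘ ⇑π⁻¹) := by
  rw [P0_eq_permMatrix, transpose_permMatrix, inv_inv, PEquiv.toMatrix_toPEquiv_mul,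
    PEquiv.mul_toMatrix_toPEquiv, submatrix_submatrix]
  exact submatrix_diagonal_equiv d π⁻¹

lemma flipMat_mul_diagonal_mul_self {p : ℕ} (d : Fin p → ℝ) :
    flipMat p * diagonal d * flipMat p = diagonal d := by
  rw [flipMat, diagonal_mul_diagonal, diagonal_mul_diagonal]
  congr 1
  funext i
  split_ifs <;> ring

lemma flipMat_mul_self (p : ℕ) : flipMat p * flipMat p = 1 := by
  simpa using flipMat_mul_diagonal_mul_self (p := p) 1

lemma det_flipMat {p : ℕ} (hp : p ≠ 0) : (flipMat p).det = -1 := by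
  rw [flipMat, det_diagonal, Finset.prod_eq_single (⟨0, Nat.pos_of_ne_zero hp⟩ : Fin p)]
  · simp
  · intro i _ hi
    simp [Fin.ext_iff.not.mp hi]
  · simp

lemma Pmat_mul_transpose {p : ℕ} (π : Equiv.Perm (Fin p)) : Pmat π * (Pmat π)ᵀ = 1 := by
  unfold Pmat
  split_ifs
  · exact P0_mul_transpose π
  · rw [transpose_mul, flipMat, diagonal_transpose, ← flipMat, Matrix.mul_assoc,
      ← Matrix.mul_assoc (P0 π), P0_mul_transpose, Matrix.one_mul, flipMat_mul_self]

lemma det_Pmat {p : ℕ} (π : Equiv.Perm (Fin p)) : (Pmat π).det = 1 := by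
  unfold Pmat
  split_ifs with h
  · exact h
  · have hp : p ≠ 0 := by
      rintro rfl
      exact h det_isEmpty
    have hP0 : (P0 π).det = -1 := by
      rcases Int.units_eq_one_or (Equiv.Perm.sign π⁻¹) with hs | hs <;>
        simp_all [det_P0]
    rw [det_mul, det_flipMat hp, hP0]
    norm_num

lemma Pmat_isSO {p : ℕ} (π : Equiv.Perm (Fin p)) : IsSO (Pmat π) :=
  ⟨Pmat_mul_transpose π, det_Pmat π⟩

lemma permDiag_diagonal {p : ℕ} (π : Equiv.Perm (Fin p)) (d : Fin p → ℝ) :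
    permDiag π (diagonal d) = diagonal (d ∘ ⇑π⁻¹) := by
  unfold permDiag Pmat
  split_ifs
  · exact P0_mul_diagonal_mul_transpose π d
  · rw [transpose_mul, flipMat, diagonal_transpose, ← flipMat]
    calc flipMat p * P0 π * diagonal d * ((P0 π)ᵀ * flipMat p)
        = flipMat p * (P0 π * diagonal d * (P0 π)ᵀ) * flipMat p := by
          simp only [Matrix.mul_assoc]
      _ = diagonal (d ∘ ⇑π⁻¹) := by
          rw [P0_mul_diagonal_mul_transpose, flipMat_mul_diagonal_mul_self]

lemma permDiag_apply_self {p : ℕ} (π : Equiv.Perm (Fin p)) {D : Mat p} (hD : D.IsDiag)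
    (i : Fin p) : permDiag π D i i = D (π⁻¹ i) (π⁻¹ i) := by
  conv_lhs => rw [← hD.diagonal_diag, permDiag_diagonal, diagonal_apply_eq]
  rfl

lemma IsDiagPos.permDiag {p : ℕ} (π : Equiv.Perm (Fin p)) {D : Mat p} (hD : IsDiagPos D) :
    IsDiagPos (permDiag π D) := by
  refine ⟨?_, fun i => permDiag_apply_self π hD.1 i ▸ hD.2 _⟩
  rw [← hD.1.diagonal_diag, permDiag_diagonal]
  exact isDiag_diagonal _

lemma dDsq_permDiag {p : ℕ} (π : Equiv.Perm (Fin p)) {D Λ : Mat p} (hD : D.IsDiag)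
    (hΛ : Λ.IsDiag) : dDsq (permDiag π D) (permDiag π Λ) = dDsq D Λ := by
  unfold dDsq
  simp only [permDiag_apply_self π hD, permDiag_apply_self π hΛ]
  exact Equiv.sum_comp π⁻¹ fun i => (Real.log (Λ i i) - Real.log (D i i)) ^ 2

lemma dSOsq_mul_right {p : ℕ} {W : Mat p} (hW : W * Wᵀ = 1) (U V : Mat p) :
    dSOsq (U * W) (V * W) = dSOsq U V := by
  unfold dSOsq
  rw [transpose_mul, Matrix.mul_assoc, ← Matrix.mul_assoc W, hW, Matrix.one_mul]

lemma gdist_mul_right {p : ℕ} (k : ℝ) {W : Mat p} (hW : W * Wᵀ = 1) (U D V Λ : Mat p) :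
    gdist k (U * W, D) (V * W, Λ) = gdist k (U, D) (V, Λ) := by
  simp only [gdist, dSOsq_mul_right hW]

lemma gdist_mul_transpose_Pmat_permDiag {p : ℕ} (k : ℝ) (π : Equiv.Perm (Fin p))
    {D Λ : Mat p} (hD : D.IsDiag) (hΛ : Λ.IsDiag) (U V : Mat p) :
    gdist k (U * (Pmat π)ᵀ, permDiag π D) (V * (Pmat π)ᵀ, permDiag π Λ)
      = gdist k (U, D) (V, Λ) := by
  simp only [gdist, dDsq_permDiag π hD hΛ, dSOsq_mul_right (Pmat_isSO π).transpose.1]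

lemma mul_mem_versions_of_mem_GD {p : ℕ} {X U D R : Mat p} (hUD : (U, D) ∈ Versions X)
    (hR : R ∈ GD D) : (U * R, D) ∈ Versions X := by
  refine ⟨hUD.1.mul hR.1, hUD.2.1, ?_⟩
  calc U * R * D * (U * R)ᵀ = U * (R * D * Rᵀ) * Uᵀ := by
        simp only [transpose_mul, Matrix.mul_assoc]
    _ = X := by rw [hR.2, hUD.2.2]

lemma mul_transpose_Pmat_mem_versions {p : ℕ} (π : Equiv.Perm (Fin p)) {X U D : Mat p}
    (hUD : (U, D) ∈ Versions X) : (U * (Pmat π)ᵀ, permDiag π D) ∈ Versions X := by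
  refine ⟨hUD.1.mul (Pmat_isSO π).transpose, hUD.2.1.permDiag π, ?_⟩
  have hPP : (Pmat π)ᵀ * Pmat π = 1 := mul_eq_one_comm.mp (Pmat_mul_transpose π)
  calc U * (Pmat π)ᵀ * permDiag π D * (U * (Pmat π)ᵀ)ᵀ
      = U * ((Pmat π)ᵀ * Pmat π) * D * ((Pmat π)ᵀ * Pmat π) * Uᵀ := by
        simp only [permDiag, transpose_mul, transpose_transpose, Matrix.mul_assoc]
    _ = X := by rw [hPP, Matrix.mul_one, Matrix.mul_one, hUD.2.2]

theorem minimal_pair_equivalence_general {p : ℕ} (k : ℝ) (X Y : Mat p)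
    (U D V Λ : Mat p) (hUD : (U, D) ∈ Versions X) (hVL : (V, Λ) ∈ Versions Y)
    (hmin : gdist k (U, D) (V, Λ) = dSR k X Y)
    (π : Equiv.Perm (Fin p)) (R : Mat p) (hR : IsSO R)
    (hRD : R * D * Rᵀ = D) (hRΛ : R * Λ * Rᵀ = Λ) :
    (U * R * (Pmat π)ᵀ, permDiag π D) ∈ Versions X ∧
    (V * R * (Pmat π)ᵀ, permDiag π Λ) ∈ Versions Y ∧
    gdist k (U * R * (Pmat π)ᵀ, permDiag π D) (V * R * (Pmat π)ᵀ, permDiag π Λ)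
      = dSR k X Y := by
  refine ⟨mul_transpose_Pmat_mem_versions π (mul_mem_versions_of_mem_GD hUD ⟨hR, hRD⟩),
    mul_transpose_Pmat_mem_versions π (mul_mem_versions_of_mem_GD hVL ⟨hR, hRΛ⟩), ?_⟩
  rw [gdist_mul_transpose_Pmat_permDiag k π hUD.2.1.1 hVL.2.1.1, gdist_mul_right k hR.1, hmin]

/-- equivalence of minimal pairs under simultaneous rotation and
permutation. -/
theorem minimal_pair_equivalence {p : ℕ} (hp : 2 ≤ p) (k : ℝ) (hk : 0 < k)
    (X Y : Mat p) (hX : X.PosDef) (hY : Y.PosDef)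
    (U D V Λ : Mat p) (hUD : (U, D) ∈ Versions X) (hVL : (V, Λ) ∈ Versions Y)
    (hmin : gdist k (U, D) (V, Λ) = dSR k X Y)
    (π : Equiv.Perm (Fin p)) (R : Mat p) (hR : IsSO R)
    (hRD : R * D * Rᵀ = D) (hRΛ : R * Λ * Rᵀ = Λ) :
    (U * R * (Pmat π)ᵀ, permDiag π D) ∈ Versions X ∧
    (V * R * (Pmat π)ᵀ, permDiag π Λ) ∈ Versions Y ∧
    gdist k (U * R * (Pmat π)ᵀ, permDiag π D) (V * R * (Pmat π)ᵀ, permDiag π Λ)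
      = dSR k X Y :=
  minimal_pair_equivalence_general k X Y U D V Λ hUD hVL hmin π R hR hRD hRΛ
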